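/- arXiv:1601.07592 — 6 statements merged into one kernel-verified Lean document; each statement's English description precedes it below -/
import Mathlib

section
/- There exists a smallest positive real number τ* such that for all real t, e^t ≤ t + e^{τ* t²}; moreover for any τ ≥ τ*, the inequality e^t ≤ t + e^{τ t²} holds for all t ∈ ℝ. -/
private lemma exp_sub_one_le_aux (x : ℝ) : Real.exp x - 1 ≤ x * Real.exp x := by
  have h1 : Real.exp x * Real.exp (-x) = 1 := by
    rw [← Real.exp_add]; simp
  have h2 : -x + 1 ≤ Real.exp (-x) := Real.add_one_le_exp (-x)
  nlinarith [Real.exp_pos x, Real.exp_pos (-x)]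

private lemma one_mem_aux (t : ℝ) : Real.exp t ≤ t + Real.exp (t ^ 2) := by
  rcases le_or_gt t 0 with ht | ht
  · -- exp t ≤ 1/(1-t) ≤ 1 + t + t² ≤ t + exp(t²)
    have h1 : Real.exp t * Real.exp (-t) = 1 := by rw [← Real.exp_add]; simp
    have h2 : -t + 1 ≤ Real.exp (-t) := Real.add_one_le_exp (-t)
    have h3 : t ^ 2 + 1 ≤ Real.exp (t ^ 2) := Real.add_one_le_exp (t ^ 2)
    nlinarith [Real.exp_pos t, Real.exp_pos (-t)]
  · have ht' : 0 ≤ t := le_of_lt ht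
    have hx : Real.exp t = Real.exp (t ^ 2) * Real.exp (t - t ^ 2) := by
      rw [← Real.exp_add]; ring_nf
    have h1 : Real.exp (t - t ^ 2) - 1 ≤ (t - t ^ 2) * Real.exp (t - t ^ 2) :=
      exp_sub_one_le_aux (t - t ^ 2)
    have h2 : Real.exp t - 1 ≤ t * Real.exp t := exp_sub_one_le_aux t
    -- exp t - exp(t²) ≤ (t - t²) exp t ≤ t(1-t) exp t ≤ t
    nlinarith [Real.exp_pos (t ^ 2), Real.exp_pos t, Real.exp_pos (t - t ^ 2),
      mul_nonneg ht' (sub_nonneg.mpr h2),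
      mul_le_mul_of_nonneg_left h1 (Real.exp_pos (t ^ 2)).le]

/-- There exists a smallest positive real `τ*` such that `e^t ≤ t + e^{τ* t²}` for all real
`t`; moreover for any `τ ≥ τ*` the inequality holds for all `t`. -/
theorem stmt_0 :
    ∃ τstar : ℝ, 0 < τstar ∧
      (∀ t : ℝ, Real.exp t ≤ t + Real.exp (τstar * t ^ 2)) ∧
      (∀ τ : ℝ, 0 < τ → (∀ t : ℝ, Real.exp t ≤ t + Real.exp (τ * t ^ 2)) → τstar ≤ τ) ∧
      (∀ τ : ℝ, τstar ≤ τ → ∀ t : ℝ, Real.exp t ≤ t + Real.exp (τ * t ^ 2)) := by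
  set S : Set ℝ := {τ : ℝ | ∀ t : ℝ, Real.exp t ≤ t + Real.exp (τ * t ^ 2)} with hS
  have h1S : (1 : ℝ) ∈ S := by
    intro t; simpa using one_mem_aux t
  set c : ℝ := Real.log (Real.exp 2 - 2) / 4 with hc
  have hcpos : 0 < c := by
    have : (2 : ℝ) + 1 < Real.exp 2 := Real.add_one_lt_exp (by norm_num)
    have h1 : (1 : ℝ) < Real.exp 2 - 2 := by linarith
    have := Real.log_pos h1
    positivity
  have hlb : ∀ τ ∈ S, c ≤ τ := by
    intro τ hτ
    have h2 := hτ 2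
    have h3 : Real.exp 2 - 2 ≤ Real.exp (τ * 2 ^ 2) := by linarith
    have hpos : (0 : ℝ) < Real.exp 2 - 2 := by
      have : (2 : ℝ) + 1 ≤ Real.exp 2 := Real.add_one_le_exp 2
      linarith
    have := (Real.log_le_iff_le_exp hpos).mpr h3
    rw [hc]; linarith
  have hbdd : BddBelow S := ⟨c, hlb⟩
  have hclosed : IsClosed S := by
    have hEq : S = ⋂ t : ℝ, {τ : ℝ | Real.exp t ≤ t + Real.exp (τ * t ^ 2)} := by
      ext τ; simp [hS, Set.mem_iInter]
    rw [hEq]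
    exact isClosed_iInter fun t =>
      isClosed_le continuous_const (by continuity)
  have hmem : sInf S ∈ S := hclosed.csInf_mem ⟨1, h1S⟩ hbdd
  refine ⟨sInf S, ?_, hmem, ?_, ?_⟩
  · exact lt_of_lt_of_le hcpos (le_csInf ⟨1, h1S⟩ hlb)
  · intro τ _ hτ
    exact csInf_le hbdd hτ
  · intro τ hτ t
    have h1 := hmem t
    have h2 : Real.exp (sInf S * t ^ 2) ≤ Real.exp (τ * t ^ 2) :=
      Real.exp_le_exp.mpr (mul_le_mul_of_nonneg_right hτ (sq_nonneg t))
    linarith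
end

section
/- Let η be a zero-mean Gaussian random vector in ℝⁿ with max_i E[ηᵢ²] ≤ σ̄², and let η_n = max_{1≤i≤n}|ηᵢ|. Then for every t with 0 ≤ t < 1/(√2 σ̄), one has E[exp(t² η_n²)] ≤ n^{2t²σ̄²} / (1 − 2t²σ̄²). -/
open MeasureTheory ProbabilityTheory Real Set

lemma rpow_two_eq (x : ℝ) : x ^ (2:ℝ) = x ^ 2 := by
  rw [show (2:ℝ) = ((2:ℕ):ℝ) by norm_num, Real.rpow_natCast]

lemma gauss_sq_integral (b : ℝ) (hb : 0 < b) :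
    ∫ x : ℝ, x^2 * rexp (-b * x^2) = Real.sqrt π / (2 * b * Real.sqrt b) := by
  have h1 : ∫ x in Ioi (0:ℝ), x^2 * rexp (-b * x^2)
      = b ^ (-(2+1)/2 : ℝ) * (1/2) * Real.Gamma ((2+1)/2) := by
    rw [← integral_rpow_mul_exp_neg_mul_rpow two_pos (by norm_num) hb]
    refine setIntegral_congr_fun measurableSet_Ioi (fun x hx => ?_)
    rw [rpow_two_eq]
  have heven : ∫ x in Iic (0:ℝ), x^2 * rexp (-b * x^2)
      = ∫ x in Ioi (0:ℝ), x^2 * rexp (-b * x^2) := by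
    rw [show Iic (0:ℝ) = Iic (-0) by norm_num, ← integral_comp_neg_Ioi]
    simp
  have hint : Integrable (fun x : ℝ => x^2 * rexp (-b * x^2)) := by
    have h := integrable_rpow_mul_exp_neg_mul_sq hb (s := 2) (by norm_num)
    simpa [rpow_two_eq] using h
  have hsplit : ∫ x : ℝ, x^2 * rexp (-b * x^2)
      = (∫ x in Iic (0:ℝ), x^2 * rexp (-b * x^2)) + ∫ x in Ioi (0:ℝ), x^2 * rexp (-b * x^2) := by
    rw [← setIntegral_union (Iic_disjoint_Ioi le_rfl) measurableSet_Ioi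
      hint.integrableOn hint.integrableOn, Iic_union_Ioi, setIntegral_univ]
  have hG : Real.Gamma ((2+1)/2 : ℝ) = Real.sqrt π / 2 := by
    rw [show ((2+1)/2 : ℝ) = 1/2 + 1 by norm_num, Real.Gamma_add_one (by norm_num),
      Real.Gamma_one_half_eq]
    ring
  rw [hsplit, heven, h1, hG]
  rw [show (-(2+1)/2 : ℝ) = -(3/2) by norm_num, Real.rpow_neg hb.le]
  rw [show (3/2 : ℝ) = 1 + 1/2 by norm_num, Real.rpow_add hb, Real.rpow_one,
    ← Real.sqrt_eq_rpow]
  have hsb : 0 < Real.sqrt b := Real.sqrt_pos.2 hb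
  field_simp
  ring

lemma gaussianReal_sq_moment (v : NNReal) : ∫ x, x^2 ∂(gaussianReal 0 v) = v := by
  by_cases hv : v = 0
  · simp [hv, gaussianReal_zero_var]
  · rw [gaussianReal_of_var_ne_zero _ hv]
    have hpdf : (gaussianPDF 0 v) = fun x => ((Real.toNNReal (gaussianPDFReal 0 v x) : NNReal) : ENNReal) := rfl
    rw [hpdf, integral_withDensity_eq_integral_smul
      ((measurable_gaussianPDFReal 0 v).real_toNNReal) (fun x => x^2)]
    have hb : 0 < (2 * (v:ℝ))⁻¹ := by positivity
    have : ∀ x : ℝ, (Real.toNNReal (gaussianPDFReal 0 v x) : NNReal) • x^2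
        = (Real.sqrt (2 * π * v))⁻¹ * (x^2 * rexp (-(2 * (v:ℝ))⁻¹ * x^2)) := by
      intro x
      have : gaussianPDFReal 0 v x = (Real.sqrt (2 * π * v))⁻¹ * rexp (-(2 * (v:ℝ))⁻¹ * x^2) := by
        rw [gaussianPDFReal]
        congr 1
        rw [sub_zero]
        congr 1
        field_simp
      rw [NNReal.smul_def, smul_eq_mul, Real.coe_toNNReal _ (gaussianPDFReal_nonneg 0 v x), this]
      ring
    rw [integral_congr_ae (Filter.Eventually.of_forall this), integral_const_mul,
      gauss_sq_integral _ hb]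
    have hvpos : (0:ℝ) < v := lt_of_le_of_ne (v.coe_nonneg) (by exact_mod_cast (Ne.symm hv))
    rw [show (2 * π * (v:ℝ)) = (2 * (v:ℝ)) * π by ring, Real.sqrt_mul (by positivity),
      show ((2 * (v:ℝ))⁻¹) = (2*(v:ℝ))⁻¹ from rfl]
    have h2v : (0:ℝ) < 2 * v := by positivity
    have hs2v : 0 < Real.sqrt (2*(v:ℝ)) := Real.sqrt_pos.2 h2v
    have hsπ : 0 < Real.sqrt π := Real.sqrt_pos.2 Real.pi_pos
    rw [Real.sqrt_inv]
    field_simp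

lemma gaussianReal_abs_tail (v : NNReal) (w r : ℝ) (hw : 0 < w) (hvw : (v:ℝ) ≤ w)
    (hr : 0 ≤ r) :
    gaussianReal 0 v {x | r ≤ |x|} ≤ ENNReal.ofReal (rexp (-(r^2) / (2*w))) := by
  have hset : MeasurableSet {x : ℝ | r ≤ |x|} :=
    measurableSet_le measurable_const (measurable_id.abs)
  have hbw : rexp (-(r^2)/(2*(v:ℝ))) ≤ rexp (-(r^2)/(2*w)) ∨ v = 0 := by
    by_cases hv : v = 0
    · exact Or.inr hv
    · left
      have hv0 : (0:ℝ) < v := lt_of_le_of_ne v.coe_nonneg (by exact_mod_cast Ne.symm hv)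
      apply Real.exp_le_exp.2
      rw [div_le_div_iff₀ (by positivity) (by positivity)]
      nlinarith [sq_nonneg r]
  by_cases hv : v = 0
  · subst hv
    rw [gaussianReal_zero_var, Measure.dirac_apply' _ hset]
    rcases eq_or_lt_of_le hr with h0 | h0
    · have : (-(r^2)/(2*w)) = 0 := by rw [← h0]; simp
      rw [this]
      simp [indicator]
      split <;> simp
    · have : (0:ℝ) ∉ {x : ℝ | r ≤ |x|} := by simp [h0.not_ge]
      rw [indicator_of_notMem this]
      simp
  · have hv0 : (0:ℝ) < v := lt_of_le_of_ne v.coe_nonneg (by exact_mod_cast Ne.symm hv)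
    set b : ℝ := (2*(v:ℝ))⁻¹ with hbdef
    have hb : 0 < b := by positivity
    -- symmetry
    have hsym : gaussianReal 0 v (Iic (-r)) = gaussianReal 0 v (Ici r) := by
      have hmap : Measure.map (fun x => (-1:ℝ) * x) (gaussianReal 0 v) = gaussianReal 0 v := by
        rw [gaussianReal_map_const_mul (-1 : ℝ)]
        norm_num
      conv_lhs => rw [← hmap]
      rw [Measure.map_apply (measurable_const_mul _) measurableSet_Iic]
      congr 1
      ext x
      simp only [mem_preimage, mem_Iic, mem_Ici, neg_one_mul, neg_le_neg_iff]
    -- bound on Ici r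
    have hIci : gaussianReal 0 v (Ici r) ≤ ENNReal.ofReal (rexp (-(r^2)/(2*(v:ℝ))) / 2) := by
      rw [gaussianReal_apply_eq_integral 0 hv (Ici r)]
      apply ENNReal.ofReal_le_ofReal
      have hpdf : ∀ x : ℝ, gaussianPDFReal 0 v x
          = (Real.sqrt (2*π*(v:ℝ)))⁻¹ * rexp (-b * x^2) := by
        intro x
        rw [gaussianPDFReal]
        congr 1
        rw [sub_zero, hbdef]
        field_simp
      have hint1 : IntegrableOn (fun x => (Real.sqrt (2*π*(v:ℝ)))⁻¹ * rexp (-b * x^2)) (Ici r) := by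
        exact ((integrable_exp_neg_mul_sq hb).const_mul _).integrableOn
      have hint2 : IntegrableOn
          (fun x => (Real.sqrt (2*π*(v:ℝ)))⁻¹ * (rexp (-b * r^2) * rexp (-b * (x-r)^2))) (Ici r) := by
        exact ((((integrable_exp_neg_mul_sq hb).comp_sub_right r).const_mul _).const_mul _).integrableOn
      calc ∫ x in Ici r, gaussianPDFReal 0 v x
          = ∫ x in Ici r, (Real.sqrt (2*π*(v:ℝ)))⁻¹ * rexp (-b * x^2) :=
            setIntegral_congr_fun measurableSet_Ici (fun x _ => hpdf x)
        _ ≤ ∫ x in Ici r, (Real.sqrt (2*π*(v:ℝ)))⁻¹ * (rexp (-b * r^2) * rexp (-b * (x-r)^2)) := by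
            refine setIntegral_mono_on hint1 hint2 measurableSet_Ici (fun x hx => ?_)
            have hxr : r ≤ x := hx
            have key : -b * x^2 ≤ -b * r^2 + -b * (x-r)^2 := by
              nlinarith [mul_nonneg hb.le (mul_nonneg hr (sub_nonneg.2 hxr))]
            have := Real.exp_le_exp.2 key
            rw [Real.exp_add] at this
            exact mul_le_mul_of_nonneg_left this (by positivity)
        _ = (Real.sqrt (2*π*(v:ℝ)))⁻¹ * rexp (-b * r^2) * ∫ x in Ici r, rexp (-b * (x-r)^2) := by
            rw [← integral_const_mul]
            congr 1
            ext x
            ring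
        _ = (Real.sqrt (2*π*(v:ℝ)))⁻¹ * rexp (-b * r^2) * (Real.sqrt (π/b) / 2) := by
            congr 1
            have h := (measurePreserving_sub_right (volume : Measure ℝ) r).setIntegral_preimage_emb
              (MeasurableEquiv.subRight r).measurableEmbedding (fun y => rexp (-b * y^2)) (Ici 0)
            have hpre : (fun x => x - r) ⁻¹' (Ici (0:ℝ)) = Ici r := by ext x; simp [sub_nonneg]
            rw [show (∫ x in Ici r, rexp (-b * (x - r)^2)) = ∫ x in Ici (0:ℝ), rexp (-b * x^2)
              from by simpa [hpre] using h, integral_Ici_eq_integral_Ioi, integral_gaussian_Ioi]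
        _ = rexp (-(r^2)/(2*(v:ℝ))) / 2 := by
            rw [show π / b = 2*π*(v:ℝ) by rw [hbdef]; field_simp]
            have hs : 0 < Real.sqrt (2*π*(v:ℝ)) := Real.sqrt_pos.2 (by positivity)
            rw [show -b * r^2 = -(r^2)/(2*(v:ℝ)) by rw [hbdef]; field_simp]
            field_simp
    calc gaussianReal 0 v {x | r ≤ |x|}
        ≤ gaussianReal 0 v (Iic (-r) ∪ Ici r) := by
          apply measure_mono
          intro x hx
          have hx' : r ≤ |x| := hx
          rcases le_abs.1 hx' with h | h
          · exact Or.inr h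
          · exact Or.inl (by simpa using le_neg.1 h)
      _ ≤ gaussianReal 0 v (Iic (-r)) + gaussianReal 0 v (Ici r) := measure_union_le _ _
      _ = gaussianReal 0 v (Ici r) + gaussianReal 0 v (Ici r) := by rw [hsym]
      _ ≤ ENNReal.ofReal (rexp (-(r^2)/(2*(v:ℝ))) / 2) + ENNReal.ofReal (rexp (-(r^2)/(2*(v:ℝ))) / 2) :=
          add_le_add hIci hIci
      _ = ENNReal.ofReal (rexp (-(r^2)/(2*(v:ℝ)))) := by
          rw [← ENNReal.ofReal_add (by positivity) (by positivity)]
          norm_num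
      _ ≤ ENNReal.ofReal (rexp (-(r^2)/(2*w))) :=
          ENNReal.ofReal_le_ofReal (hbw.resolve_right hv)

set_option maxHeartbeats 1000000 in
/-- Let `η` be a zero-mean Gaussian random vector in `ℝⁿ` with `E[ηᵢ²] ≤ σ̄²`, and let
`η_n = maxᵢ |ηᵢ|` (the sup norm). Then for `0 ≤ t < 1/(√2 σ̄)`,
`E[exp(t² η_n²)] ≤ n^{2t²σ̄²}/(1 − 2t²σ̄²)`. -/
theorem stmt_7 {Ω : Type*} {mΩ : MeasurableSpace Ω} (μ : Measure Ω)
    [IsProbabilityMeasure μ] (n : ℕ) (hn : 1 ≤ n) (η : Ω → (Fin n → ℝ))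
    (hmeas : Measurable η)
    (hGauss : ∀ a : Fin n → ℝ, ∃ v : NNReal,
      Measure.map (fun ω => ∑ i, a i * η ω i) μ = gaussianReal 0 v)
    (σbar : ℝ) (hσ : 0 < σbar) (hvar : ∀ i, ∫ ω, (η ω i) ^ 2 ∂μ ≤ σbar ^ 2)
    (t : ℝ) (ht0 : 0 ≤ t) (ht : t < 1 / (Real.sqrt 2 * σbar)) :
    ∫ ω, Real.exp (t ^ 2 * ‖η ω‖ ^ 2) ∂μ ≤
      (n : ℝ) ^ (2 * t ^ 2 * σbar ^ 2) / (1 - 2 * t ^ 2 * σbar ^ 2) := by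
  have hnR : (1:ℝ) ≤ (n:ℝ) := by exact_mod_cast hn
  have hnpos : (0:ℝ) < n := lt_of_lt_of_le one_pos hnR
  set s : ℝ := 2 * t ^ 2 * σbar ^ 2 with hs_def
  have hs0 : 0 ≤ s := by positivity
  have hs1 : s < 1 := by
    have h2σ : 0 < Real.sqrt 2 * σbar := by positivity
    have h1 : t * (Real.sqrt 2 * σbar) < 1 := by
      rw [lt_div_iff₀ h2σ] at ht; linarith
    have h2 : (t * (Real.sqrt 2 * σbar))^2 < 1 := by
      nlinarith [mul_nonneg ht0 h2σ.le]
    calc s = (t * (Real.sqrt 2 * σbar))^2 := by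
            rw [mul_pow, mul_pow, Real.sq_sqrt (by norm_num : (0:ℝ) ≤ 2)]; ring
      _ < 1 := h2
  -- the t = 0 case
  rcases eq_or_lt_of_le ht0 with htz | htpos
  · simp only [← htz, ne_eq, OfNat.ofNat_ne_zero, not_false_eq_true, zero_pow, zero_mul,
      Real.exp_zero, mul_zero, mul_comm]
    rw [integral_const, smul_eq_mul, probReal_univ, one_mul]
    have hsz : s = 0 := by rw [hs_def, ← htz]; ring
    rw [hsz, Real.rpow_zero]
    norm_num
  -- main case t > 0
  have h1div : ∀ (sv : ℝ), 0 ≤ sv → sv < 1 → (1:ℝ) ≤ (n:ℝ) ^ sv / (1 - sv) := by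
    intro sv h0 h1
    rw [le_div_iff₀ (by linarith)]
    have := Real.one_le_rpow hnR h0
    nlinarith
  set A : ℝ := 1 / (2 * σbar^2) with hA_def
  have hApos : 0 < A := by positivity
  have htA : t^2 < A := by
    rw [hA_def, lt_div_iff₀ (by positivity)]
    nlinarith
  set β : ℝ := A - t^2 with hβ_def
  have hβ : 0 < β := by simp only [hβ_def]; linarith
  have hMmeas : Measurable fun ω => ‖η ω‖ := hmeas.norm
  -- tail bound for the max
  have htail : ∀ r : ℝ, 0 ≤ r →
      μ {ω | r ≤ ‖η ω‖} ≤ (n : ENNReal) * ENNReal.ofReal (rexp (-(r^2) / (2*σbar^2))) := by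
    intro r hr
    have hset : MeasurableSet {x : ℝ | r ≤ |x|} :=
      measurableSet_le measurable_const measurable_id.abs
    have hsub : {ω | r ≤ ‖η ω‖} ⊆ ⋃ i, {ω | r ≤ |η ω i|} := by
      intro ω hω
      have hω' : r ≤ ‖η ω‖ := hω
      rcases le_or_gt r 0 with h0 | h0
      · exact mem_iUnion.2 ⟨⟨0, hn⟩, le_trans h0 (abs_nonneg _)⟩
      · by_contra hcon
        simp only [mem_iUnion, mem_setOf_eq, not_exists, not_le] at hcon
        have : ‖η ω‖ < r := (pi_norm_lt_iff h0).2 fun i => by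
          rw [Real.norm_eq_abs]; exact hcon i
        linarith
    have hterm : ∀ i : Fin n,
        μ {ω | r ≤ |η ω i|} ≤ ENNReal.ofReal (rexp (-(r^2) / (2*σbar^2))) := by
      intro i
      obtain ⟨v, hv⟩ := hGauss (Pi.single i 1)
      have hmeasi : Measurable fun ω => η ω i := (measurable_pi_apply i).comp hmeas
      have hmap : Measure.map (fun ω => η ω i) μ = gaussianReal 0 v := by
        rw [← hv]; congr 1; funext ω
        simp [Pi.single_apply]
      have hvle : (v:ℝ) ≤ σbar^2 := by
        have hm := gaussianReal_sq_moment v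
        rw [← hmap, integral_map hmeasi.aemeasurable
          ((continuous_pow 2).aestronglyMeasurable)] at hm
        rw [← hm]; exact hvar i
      have heq : μ {ω | r ≤ |η ω i|} = (gaussianReal 0 v) {x | r ≤ |x|} := by
        rw [← hmap, Measure.map_apply hmeasi hset]; rfl
      rw [heq]
      exact gaussianReal_abs_tail v (σbar^2) r (by positivity) hvle hr
    calc μ {ω | r ≤ ‖η ω‖} ≤ μ (⋃ i, {ω | r ≤ |η ω i|}) := measure_mono hsub
      _ ≤ ∑ i : Fin n, μ {ω | r ≤ |η ω i|} := measure_iUnion_fintype_le _ _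
      _ ≤ ∑ _i : Fin n, ENNReal.ofReal (rexp (-(r^2) / (2*σbar^2))) :=
          Finset.sum_le_sum fun i _ => hterm i
      _ = (n : ENNReal) * ENNReal.ofReal (rexp (-(r^2) / (2*σbar^2))) := by
          rw [Finset.sum_const, Finset.card_univ, Fintype.card_fin, nsmul_eq_mul]
  -- the layer-cake function
  have hgcont : Continuous fun r : ℝ => 2*t^2*r*rexp (t^2*r^2) := by fun_prop
  have hFTC : ∀ x : ℝ, ∫ r in (0:ℝ)..x, (2*t^2*r*rexp (t^2*r^2)) = rexp (t^2*x^2) - 1 := by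
    intro x
    have hderiv : ∀ y ∈ uIcc (0:ℝ) x,
        HasDerivAt (fun z => rexp (t^2 * z^2)) (2*t^2*y*rexp (t^2*y^2)) y := by
      intro y _
      have h1 : HasDerivAt (fun z : ℝ => t^2 * z^2) (t^2 * (2*y)) y := by
        simpa using (hasDerivAt_pow 2 y).const_mul (t^2)
      have := h1.exp
      convert this using 1
      ring
    rw [intervalIntegral.integral_eq_sub_of_hasDerivAt hderiv (hgcont.intervalIntegrable 0 x)]
    norm_num
  have hlayer := lintegral_comp_eq_lintegral_meas_le_mul μ
    (f := fun ω => ‖η ω‖) (g := fun r => 2*t^2*r*rexp (t^2*r^2))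
    (Filter.Eventually.of_forall fun ω => norm_nonneg _) hMmeas.aemeasurable
    (fun T hT => hgcont.intervalIntegrable 0 T)
    ((ae_restrict_iff' measurableSet_Ioi).2 (Filter.Eventually.of_forall
      fun r hr => by
        have hrpos : (0:ℝ) < r := hr
        positivity))
  simp only [hFTC] at hlayer
  -- split point
  set r₀ : ℝ := Real.sqrt (2 * σbar^2 * Real.log n) with hr₀_def
  have hlogn : 0 ≤ Real.log n := Real.log_nonneg hnR
  have hr₀ : 0 ≤ r₀ := Real.sqrt_nonneg _
  have hr₀sq : r₀^2 = 2 * σbar^2 * Real.log n := Real.sq_sqrt (by positivity)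
  have hexp₀ : rexp (t^2 * r₀^2) = (n:ℝ) ^ s := by
    rw [Real.rpow_def_of_pos hnpos, hr₀sq, hs_def]
    congr 1; ring
  have hexpA : rexp (-(r₀^2) / (2*σbar^2)) = ((n:ℝ))⁻¹ := by
    rw [hr₀sq, show -(2 * σbar^2 * Real.log n) / (2*σbar^2) = -Real.log n by
      field_simp, Real.exp_neg, Real.exp_log hnpos]
  -- bound on Ioc 0 r₀
  have hI₁ : ∫⁻ r in Ioc 0 r₀, μ {a | r ≤ ‖η a‖} * ENNReal.ofReal (2*t^2*r*rexp (t^2*r^2))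
      ≤ ENNReal.ofReal ((n:ℝ)^s - 1) := by
    calc ∫⁻ r in Ioc 0 r₀, μ {a | r ≤ ‖η a‖} * ENNReal.ofReal (2*t^2*r*rexp (t^2*r^2))
        ≤ ∫⁻ r in Ioc 0 r₀, ENNReal.ofReal (2*t^2*r*rexp (t^2*r^2)) := by
          refine lintegral_mono fun r => ?_
          calc μ {a | r ≤ ‖η a‖} * ENNReal.ofReal (2*t^2*r*rexp (t^2*r^2))
              ≤ 1 * ENNReal.ofReal (2*t^2*r*rexp (t^2*r^2)) := mul_le_mul_left prob_le_one _
            _ = ENNReal.ofReal (2*t^2*r*rexp (t^2*r^2)) := one_mul _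
      _ = ENNReal.ofReal (∫ r in Ioc 0 r₀, 2*t^2*r*rexp (t^2*r^2)) := by
          rw [← ofReal_integral_eq_lintegral_ofReal (hgcont.integrableOn_Ioc)
            ((ae_restrict_iff' measurableSet_Ioc).2 (Filter.Eventually.of_forall
              fun r hr => by have : (0:ℝ) < r := hr.1; positivity))]
      _ = ENNReal.ofReal ((n:ℝ)^s - 1) := by
          rw [← intervalIntegral.integral_of_le hr₀, hFTC, hexp₀]
  -- bound on Ioi r₀
  have hne1s : (1:ℝ) - s ≠ 0 := by intro h; nlinarith
  have hβs : t^2/β = s/(1-s) := by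
    rw [div_eq_div_iff (ne_of_gt hβ) hne1s]
    have : t^2 * (1-s) = s * β := by
      rw [hs_def, hβ_def, hA_def]
      field_simp
    linarith [this]
  have hIoiInt : ∫ r in Ioi r₀, r * rexp (-β*r^2) = rexp (-β*r₀^2)/(2*β) := by
    have hder : ∀ x ∈ Ioi r₀, HasDerivAt (fun y => -(1/(2*β)) * rexp (-β*y^2))
        (x * rexp (-β*x^2)) x := by
      intro x _
      have h1 : HasDerivAt (fun y : ℝ => -β*y^2) (-β*(2*x)) x := by
        simpa using (hasDerivAt_pow 2 x).const_mul (-β)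
      have h2 := (h1.exp).const_mul (-(1/(2*β)))
      convert h2 using 1
      · rfl
      · rfl
      field_simp
    have hcont : ContinuousWithinAt (fun y => -(1/(2*β)) * rexp (-β*y^2)) (Ici r₀) r₀ :=
      (Continuous.continuousWithinAt (by fun_prop))
    have hInt : IntegrableOn (fun x : ℝ => x * rexp (-β*x^2)) (Ioi r₀) :=
      (integrable_mul_exp_neg_mul_sq hβ).integrableOn
    have htend : Filter.Tendsto (fun y => -(1/(2*β)) * rexp (-β*y^2)) Filter.atTop (nhds 0) := by
      have h1 : Filter.Tendsto (fun y : ℝ => -β*y^2) Filter.atTop Filter.atBot := by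
        have h2 : Filter.Tendsto (fun y : ℝ => β*y^2) Filter.atTop Filter.atTop :=
          (Filter.tendsto_pow_atTop (two_ne_zero)).const_mul_atTop hβ
        exact (Filter.tendsto_neg_atTop_atBot.comp h2).congr
          (fun y => by simp [Function.comp, neg_mul])
      have := (Real.tendsto_exp_atBot.comp h1).const_mul (-(1/(2*β)))
      simpa using this
    have := integral_Ioi_of_hasDerivAt_of_tendsto hcont hder hInt htend
    rw [this]
    field_simp
    ring
  have hI₂ : ∫⁻ r in Ioi r₀, μ {a | r ≤ ‖η a‖} * ENNReal.ofReal (2*t^2*r*rexp (t^2*r^2))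
      ≤ ENNReal.ofReal ((n:ℝ)^s * (s/(1-s))) := by
    have hexpsplit : ∀ r : ℝ, rexp (-(r^2)/(2*σbar^2)) * rexp (t^2*r^2) = rexp (-β*r^2) := by
      intro r
      rw [← Real.exp_add]
      congr 1
      rw [hβ_def, hA_def]
      field_simp
      ring
    have hptwise : ∀ r ∈ Ioi r₀, μ {a | r ≤ ‖η a‖} * ENNReal.ofReal (2*t^2*r*rexp (t^2*r^2))
        ≤ ENNReal.ofReal ((n:ℝ) * (2*t^2) * (r * rexp (-β*r^2))) := by
      intro r hr
      have hrpos : (0:ℝ) ≤ r := le_trans hr₀ (le_of_lt hr)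
      calc μ {a | r ≤ ‖η a‖} * ENNReal.ofReal (2*t^2*r*rexp (t^2*r^2))
          ≤ ((n:ENNReal) * ENNReal.ofReal (rexp (-(r^2)/(2*σbar^2))))
              * ENNReal.ofReal (2*t^2*r*rexp (t^2*r^2)) := by
            apply mul_le_mul_left
            have := htail r hrpos
            simpa using this
        _ = ENNReal.ofReal ((n:ℝ) * rexp (-(r^2)/(2*σbar^2)) * (2*t^2*r*rexp (t^2*r^2))) := by
            symm
            rw [ENNReal.ofReal_mul (by positivity), ENNReal.ofReal_mul (by positivity),
              ENNReal.ofReal_natCast]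
        _ = ENNReal.ofReal ((n:ℝ) * (2*t^2) * (r * rexp (-β*r^2))) := by
            congr 1
            rw [← hexpsplit r]
            ring
    calc ∫⁻ r in Ioi r₀, μ {a | r ≤ ‖η a‖} * ENNReal.ofReal (2*t^2*r*rexp (t^2*r^2))
        ≤ ∫⁻ r in Ioi r₀, ENNReal.ofReal ((n:ℝ) * (2*t^2) * (r * rexp (-β*r^2))) :=
          setLIntegral_mono' measurableSet_Ioi hptwise
      _ = ENNReal.ofReal (∫ r in Ioi r₀, (n:ℝ) * (2*t^2) * (r * rexp (-β*r^2))) := by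
          rw [← ofReal_integral_eq_lintegral_ofReal
            (((integrable_mul_exp_neg_mul_sq hβ).const_mul _).integrableOn)
            ((ae_restrict_iff' measurableSet_Ioi).2 (Filter.Eventually.of_forall
              fun r hr => by
                have : (0:ℝ) ≤ r := le_trans hr₀ (le_of_lt hr)
                positivity))]
      _ = ENNReal.ofReal ((n:ℝ)^s * (s/(1-s))) := by
          rw [integral_const_mul, hIoiInt]
          congr 1
          have hsplit2 : rexp (-β*r₀^2) = (n:ℝ)⁻¹ * (n:ℝ)^s := by
            rw [← hexpA, ← hexp₀, ← hexpsplit r₀]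
          rw [hsplit2]
          have hn0 : (n:ℝ) ≠ 0 := ne_of_gt hnpos
          rw [← hβs]
          field_simp
  -- combine the two pieces
  have hone : (1:ℝ) ≤ (n:ℝ)^s := Real.one_le_rpow hnR hs0
  have hsum : ∫⁻ ω, ENNReal.ofReal (rexp (t^2*‖η ω‖^2) - 1) ∂μ
      ≤ ENNReal.ofReal ((n:ℝ)^s/(1-s) - 1) := by
    rw [hlayer, ← Ioc_union_Ioi_eq_Ioi hr₀,
      lintegral_union measurableSet_Ioi (Ioc_disjoint_Ioi le_rfl)]
    calc _ ≤ ENNReal.ofReal ((n:ℝ)^s - 1) + ENNReal.ofReal ((n:ℝ)^s * (s/(1-s))) :=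
          add_le_add hI₁ hI₂
      _ = ENNReal.ofReal ((n:ℝ)^s/(1-s) - 1) := by
          rw [← ENNReal.ofReal_add (by linarith) (by
            have : 0 ≤ s/(1-s) := div_nonneg hs0 (by linarith)
            positivity)]
          congr 1
          field_simp
          ring
  have hRHS1 : (1:ℝ) ≤ (n:ℝ)^s/(1-s) := h1div s hs0 hs1
  have hfull : ∫⁻ ω, ENNReal.ofReal (rexp (t^2*‖η ω‖^2)) ∂μ
      ≤ ENNReal.ofReal ((n:ℝ)^s/(1-s)) := by
    have hsplit : ∀ ω, ENNReal.ofReal (rexp (t^2*‖η ω‖^2))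
        = ENNReal.ofReal (rexp (t^2*‖η ω‖^2) - 1) + 1 := by
      intro ω
      rw [← ENNReal.ofReal_one, ← ENNReal.ofReal_add
        (sub_nonneg.2 (Real.one_le_exp (by positivity))) zero_le_one]
      norm_num
    rw [lintegral_congr hsplit, lintegral_add_right _ measurable_const, lintegral_one,
      measure_univ]
    calc _ ≤ ENNReal.ofReal ((n:ℝ)^s/(1-s) - 1) + 1 := add_le_add_left hsum _
      _ = ENNReal.ofReal ((n:ℝ)^s/(1-s)) := by
        rw [← ENNReal.ofReal_one, ← ENNReal.ofReal_add (by linarith) zero_le_one]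
        norm_num
  have hmeasf : Measurable fun ω => rexp (t^2*‖η ω‖^2) :=
    (((hMmeas.pow_const 2).const_mul (t^2)).exp)
  rw [integral_eq_lintegral_of_nonneg_ae
    (Filter.Eventually.of_forall fun ω => (Real.exp_pos _).le) hmeasf.aestronglyMeasurable]
  exact ENNReal.toReal_le_of_le_ofReal (le_trans zero_le_one hRHS1) hfull
end

section
/- Let X be a convex compact set, f₀,...,f_m : X → ℝ continuous convex functions, and suppose the problem min{f₀(x) : f_i(x) ≤ 0, i=1,...,m, x∈X} is feasible with optimal value Opt. Let Φ(r) = min_{x∈X} max{f₀(x)−r, f₁(x),...,f_m(x)}. Then Opt is the smallest zero of Φ, i.e., Φ(Opt) = 0 and Φ(r) > 0 for all r < Opt. -/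
/-- For `X` convex compact, `f₀,...,f_m` continuous convex, and the problem
`min{f₀(x) : f_i(x) ≤ 0, x ∈ X}` feasible with optimal value `Opt`, the value `Opt` is the
smallest zero of `Φ(r) = min_{x∈X} max{f₀(x)−r, f₁(x),...,f_m(x)}`:
`Φ(Opt) = 0` and `Φ(r) > 0` for `r < Opt`. -/
theorem stmt_13 {E : Type*} [NormedAddCommGroup E] [InnerProductSpace ℝ E]
    [FiniteDimensional ℝ E] (X : Set E) (hXne : X.Nonempty) (hXconv : Convex ℝ X)
    (hXcomp : IsCompact X) (m : ℕ) [NeZero m]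
    (f0 : E → ℝ) (fs : Fin m → E → ℝ)
    (hf0c : Continuous f0) (hf0 : ConvexOn ℝ X f0)
    (hfsc : ∀ i, Continuous (fs i)) (hfs : ∀ i, ConvexOn ℝ X (fs i))
    (hfeas : ∃ x ∈ X, ∀ i, fs i x ≤ 0)
    (Opt : ℝ) (hOpt : Opt = sInf (f0 '' {x ∈ X | ∀ i, fs i x ≤ 0}))
    (Φ : ℝ → ℝ)
    (hΦ : Φ = fun r => sInf ((fun x => max (f0 x - r) (⨆ i, fs i x)) '' X)) :
    Φ Opt = 0 ∧ ∀ r < Opt, 0 < Φ r := by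
  haveI : Nonempty (Fin m) := Fin.pos_iff_nonempty.mp (Nat.pos_of_ne_zero (NeZero.ne m))
  -- continuity of the sup
  have hsupc : Continuous fun x => ⨆ i, fs i x := by
    have : (fun x => ⨆ i, fs i x)
        = fun x => Finset.univ.sup' Finset.univ_nonempty (fun i => fs i x) := by
      funext x
      rw [Finset.sup'_univ_eq_ciSup]
    rw [this]
    exact Continuous.finset_sup'_apply Finset.univ_nonempty fun i _ => hfsc i
  have hgc : ∀ r : ℝ, Continuous fun x => max (f0 x - r) (⨆ i, fs i x) :=
    fun r => (hf0c.sub continuous_const).max hsupc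
  -- feasible set
  set S : Set E := {x ∈ X | ∀ i, fs i x ≤ 0} with hS
  have hSne : S.Nonempty := hfeas
  have hScomp : IsCompact S := by
    apply hXcomp.inter_right
    show IsClosed {x : E | ∀ i, fs i x ≤ 0}
    have : {x : E | ∀ i, fs i x ≤ 0} = ⋂ i, {x | fs i x ≤ 0} := by
      ext x; simp
    rw [this]
    exact isClosed_iInter fun i => isClosed_le (hfsc i) continuous_const
  have hSimg : IsCompact (f0 '' S) := hScomp.image hf0c
  have hOptmem : Opt ∈ f0 '' S := hOpt ▸ hSimg.sInf_mem (hSne.image f0)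
  have hOptle : ∀ x ∈ S, Opt ≤ f0 x := fun x hx =>
    hOpt ▸ csInf_le hSimg.bddBelow ⟨x, hx, rfl⟩
  obtain ⟨xs, hxs, hxsval⟩ := hOptmem
  -- Φ attained
  have hΦmem : ∀ r : ℝ, Φ r ∈ (fun x => max (f0 x - r) (⨆ i, fs i x)) '' X := fun r => by
    rw [hΦ]
    exact (hXcomp.image (hgc r)).sInf_mem (hXne.image _)
  have hΦle : ∀ r : ℝ, ∀ x ∈ X, Φ r ≤ max (f0 x - r) (⨆ i, fs i x) := fun r x hx => by
    rw [hΦ]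
    exact csInf_le (hXcomp.image (hgc r)).bddBelow ⟨x, hx, rfl⟩
  constructor
  · -- Φ Opt = 0
    have h1 : Φ Opt ≤ 0 := by
      have := hΦle Opt xs hxs.1
      have hsup0 : (⨆ i, fs i xs) ≤ 0 := ciSup_le fun i => hxs.2 i
      calc Φ Opt ≤ max (f0 xs - Opt) (⨆ i, fs i xs) := this
        _ ≤ 0 := by rw [hxsval]; simp [hsup0]
    have h2 : 0 ≤ Φ Opt := by
      rw [hΦ]
      apply le_csInf (hXne.image _)
      rintro y ⟨x, hx, rfl⟩
      by_cases h : (⨆ i, fs i x) ≤ 0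
      · have hxS : x ∈ S := ⟨hx, fun i =>
          le_trans (le_ciSup (f := fun j => fs j x) (Set.Finite.bddAbove (Set.finite_range _)) i) h⟩
        have := hOptle x hxS
        calc (0:ℝ) ≤ f0 x - Opt := by linarith
          _ ≤ _ := le_max_left _ _
      · exact le_trans (le_of_lt (not_le.mp h)) (le_max_right _ _)
    linarith
  · -- strict positivity
    intro r hr
    obtain ⟨x, hx, hxeq⟩ := hΦmem r
    rw [← hxeq]
    by_contra h
    push_neg at h
    have h1 : f0 x - r ≤ 0 := le_trans (le_max_left _ _) h
    have h2 : (⨆ i, fs i x) ≤ 0 := le_trans (le_max_right _ _) h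
    have hxS : x ∈ S := ⟨hx, fun i =>
      le_trans (le_ciSup (f := fun j => fs j x) (Set.Finite.bddAbove (Set.finite_range _)) i) h2⟩
    have := hOptle x hxS
    linarith
end

section
/- Under the assumptions: X convex compact, f₀,...,f_m continuous convex on X, the problem min{f₀(x) : f_i(x) ≤ 0, x∈X} feasible with optimal value Opt (normalized to 0), strict feasibility level κ := −min_{x∈X} max{f₁(x),...,f_m(x)} > 0, and V := max_{x∈X} f₀(x) − Opt. Then for every δ > 0, (Φ(−δ) − Φ(0))/δ ≥ κ/(κ + V), and hence the magnitude ϑ of the left derivative of Φ at Opt satisfies ϑ ≥ κ/(V + κ), where Φ(r) = min_{x∈X} max{f₀(x)−r, f₁(x),...,f_m(x)}. -/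
/-- Lemma 2 of the paper: with optimal value normalized to `0`, strict feasibility level
`κ > 0` and `V = max_{x∈X} f₀ − Opt`, one has `(Φ(−δ) − Φ(0))/δ ≥ κ/(κ+V)` for all `δ > 0`,
hence the magnitude `ϑ` of the left derivative of `Φ` at `0 = Opt` satisfies
`ϑ ≥ κ/(V+κ)`. -/
theorem stmt_14 {E : Type*} [NormedAddCommGroup E] [InnerProductSpace ℝ E]
    [FiniteDimensional ℝ E] (X : Set E) (hXne : X.Nonempty) (hXconv : Convex ℝ X)
    (hXcomp : IsCompact X) (m : ℕ) [NeZero m]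
    (f0 : E → ℝ) (fs : Fin m → E → ℝ)
    (hf0c : Continuous f0) (hf0 : ConvexOn ℝ X f0)
    (hfsc : ∀ i, Continuous (fs i)) (hfs : ∀ i, ConvexOn ℝ X (fs i))
    (hfeas : ∃ x ∈ X, ∀ i, fs i x ≤ 0)
    (hOpt : sInf (f0 '' {x ∈ X | ∀ i, fs i x ≤ 0}) = 0)
    (κ : ℝ) (hκ : κ = -sInf ((fun x => ⨆ i, fs i x) '' X)) (hκpos : 0 < κ)
    (V : ℝ) (hV : V = sSup (f0 '' X))
    (Φ : ℝ → ℝ)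
    (hΦ : Φ = fun r => sInf ((fun x => max (f0 x - r) (⨆ i, fs i x)) '' X)) :
    (∀ δ : ℝ, 0 < δ → κ / (κ + V) ≤ (Φ (-δ) - Φ 0) / δ) ∧
      (∀ ϑ : ℝ, HasDerivWithinAt Φ (-ϑ) (Set.Iic 0) 0 → κ / (V + κ) ≤ ϑ) := by
  have hm : Nonempty (Fin m) := ⟨⟨0, Nat.pos_of_ne_zero (NeZero.ne m)⟩⟩
  obtain ⟨xf, hxfX, hxf⟩ := hfeas
  set g : E → ℝ := fun x => ⨆ i, fs i x with hgdef
  have hgc : Continuous g := by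
    have h := Continuous.finset_sup'_apply (f := fun i (x : E) => fs i x)
      Finset.univ_nonempty (fun i _ => hfsc i)
    convert h using 2 with x
    exact (Finset.sup'_univ_eq_ciSup _).symm
  have hile : ∀ x i, fs i x ≤ g x := fun x i =>
    le_ciSup (f := fun j => fs j x) (Set.Finite.bddAbove (Set.finite_range _)) i
  -- κ is attained at some xb ∈ X
  obtain ⟨xb, hxbX, hxbmin⟩ := hXcomp.exists_isMinOn hXne hgc.continuousOn
  have hgxb : g xb = -κ := by
    rw [hκ, neg_neg]
    refine le_antisymm (le_csInf (hXne.image g) ?_)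
      (csInf_le (hXcomp.image hgc).bddBelow ⟨xb, hxbX, rfl⟩)
    rintro y ⟨x, hx, rfl⟩
    exact hxbmin hx
  -- feasible points have nonnegative objective
  have hf0nn : ∀ x ∈ X, (∀ i, fs i x ≤ 0) → 0 ≤ f0 x := by
    intro x hx hfx
    have hb : BddBelow (f0 '' {x ∈ X | ∀ i, fs i x ≤ 0}) :=
      (hXcomp.image hf0c).bddBelow.mono
        (Set.image_mono (f := f0) (fun y hy => hy.1))
    have := csInf_le hb ⟨x, ⟨hx, hfx⟩, rfl⟩
    rw [hOpt] at this
    exact this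
  -- V is an upper bound, and V ≥ 0
  have hVub : ∀ x ∈ X, f0 x ≤ V := by
    intro x hx
    rw [hV]
    exact le_csSup (hXcomp.image hf0c).bddAbove ⟨x, hx, rfl⟩
  have hVnn : 0 ≤ V := le_trans (hf0nn xf hxfX hxf) (hVub xf hxfX)
  -- continuity of the inner function
  have hFc : ∀ r : ℝ, Continuous fun x => max (f0 x - r) (g x) :=
    fun r => (hf0c.sub continuous_const).max hgc
  -- Φ(r) ≥ 0 for r ≤ 0
  have hΦnn : ∀ r : ℝ, r ≤ 0 → 0 ≤ Φ r := by
    intro r hr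
    rw [hΦ]
    refine le_csInf (hXne.image _) ?_
    rintro y ⟨x, hx, rfl⟩
    rcases le_or_gt (g x) 0 with h | h
    · have hfeasx : ∀ i, fs i x ≤ 0 := fun i => (hile x i).trans h
      have := hf0nn x hx hfeasx
      exact le_max_of_le_left (by linarith)
    · exact le_max_of_le_right h.le
  -- Φ(0) = 0
  have hΦ0 : Φ 0 = 0 := by
    refine le_antisymm ?_ (hΦnn 0 le_rfl)
    have h : Φ 0 ≤ sInf (f0 '' {x ∈ X | ∀ i, fs i x ≤ 0}) := by
      refine le_csInf ⟨f0 xf, ⟨xf, ⟨hxfX, hxf⟩, rfl⟩⟩ ?_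
      rintro y ⟨x, ⟨hx, hfx⟩, rfl⟩
      have h1 : Φ 0 ≤ max (f0 x - 0) (g x) := by
        rw [hΦ]
        exact csInf_le (hXcomp.image (hFc 0)).bddBelow ⟨x, hx, rfl⟩
      have hgx : g x ≤ 0 := ciSup_le hfx
      have hf0x : 0 ≤ f0 x := hf0nn x hx hfx
      rw [sub_zero, max_eq_left (hgx.trans hf0x)] at h1
      exact h1
    rw [hOpt] at h
    exact h
  -- main estimate
  have key : ∀ δ : ℝ, 0 < δ → κ / (κ + V) ≤ (Φ (-δ) - Φ 0) / δ := by
    intro δ hδ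
    -- minimizer of the penalized function
    obtain ⟨xd, hxdX, hxdmin⟩ := hXcomp.exists_isMinOn hXne (hFc (-δ)).continuousOn
    set t := Φ (-δ) with htdef
    have ht : t = max (f0 xd - -δ) (g xd) := by
      rw [htdef, hΦ]
      refine le_antisymm (csInf_le (hXcomp.image (hFc (-δ))).bddBelow ⟨xd, hxdX, rfl⟩)
        (le_csInf (hXne.image _) ?_)
      rintro y ⟨x, hx, rfl⟩
      exact hxdmin hx
    have htnn : 0 ≤ t := hΦnn (-δ) (by linarith)
    have hf0xd : f0 xd ≤ t - δ := by
      have := le_max_left (f0 xd - -δ) (g xd)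
      rw [← ht] at this
      linarith
    have hgxd : g xd ≤ t := by
      have := le_max_right (f0 xd - -δ) (g xd)
      rw [← ht] at this
      exact this
    set lam : ℝ := t / (κ + t) with hlamdef
    have hκt : 0 < κ + t := by linarith
    have hlam0 : 0 ≤ lam := div_nonneg htnn hκt.le
    have hb : 1 - lam = κ / (κ + t) := by
      rw [hlamdef, eq_div_iff hκt.ne', sub_mul, div_mul_cancel₀ _ hκt.ne']
      ring
    have h1lam : 0 ≤ 1 - lam := by
      rw [hb]; positivity
    have hsum : lam + (1 - lam) = 1 := by ring
    set y := lam • xb + (1 - lam) • xd with hydef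
    have hyX : y ∈ X := hXconv hxbX hxdX hlam0 h1lam hsum
    have hyfeas : ∀ i, fs i y ≤ 0 := by
      intro i
      have h1 := (hfs i).2 hxbX hxdX hlam0 h1lam hsum
      simp only [smul_eq_mul] at h1
      have h2 : fs i xb ≤ -κ := (hile xb i).trans hgxb.le
      have h3 : fs i xd ≤ t := (hile xd i).trans hgxd
      have h4 : lam * fs i xb + (1 - lam) * fs i xd ≤ lam * (-κ) + (1 - lam) * t := by
        gcongr
      have h5 : lam * (-κ) + (1 - lam) * t = 0 := by
        rw [hb, hlamdef]
        field_simp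
        ring
      calc fs i y ≤ lam * fs i xb + (1 - lam) * fs i xd := h1
        _ ≤ lam * (-κ) + (1 - lam) * t := h4
        _ = 0 := h5
    have hy0 : 0 ≤ f0 y := hf0nn y hyX hyfeas
    have hconv := hf0.2 hxbX hxdX hlam0 h1lam hsum
    simp only [smul_eq_mul] at hconv
    have hupper : f0 y ≤ lam * V + (1 - lam) * (t - δ) := by
      refine hconv.trans ?_
      gcongr
      exact hVub xb hxbX
    have hnum : lam * V + (1 - lam) * (t - δ) = (t * V + κ * (t - δ)) / (κ + t) := by
      rw [hb, hlamdef]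
      field_simp
    have hkey : 0 ≤ t * V + κ * (t - δ) := by
      have h6 : 0 ≤ (t * V + κ * (t - δ)) / (κ + t) := by
        rw [← hnum]; linarith
      have := (le_div_iff₀ hκt).mp h6
      linarith
    rw [hΦ0, sub_zero, div_le_div_iff₀ (by linarith) hδ]
    nlinarith
  refine ⟨key, ?_⟩
  intro ϑ hD
  have hslope := hasDerivWithinAt_iff_tendsto_slope.mp hD
  have hset : Set.Iic (0 : ℝ) \ {0} = Set.Iio 0 := by
    ext x
    simp only [Set.mem_diff, Set.mem_Iic, Set.mem_singleton_iff, Set.mem_Iio]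
    constructor
    · rintro ⟨h1, h2⟩; exact lt_of_le_of_ne h1 h2
    · intro h; exact ⟨h.le, h.ne⟩
  rw [hset] at hslope
  have hall : ∀ x ∈ Set.Iio (0 : ℝ), slope Φ 0 x ≤ -(κ / (κ + V)) := by
    intro x hx
    have hx0 : (0 : ℝ) < -x := by simpa using hx
    have hk := key (-x) hx0
    rw [neg_neg] at hk
    rw [slope_def_field, sub_zero]
    calc (Φ x - Φ 0) / x = -((Φ x - Φ 0) / (-x)) := by
          rw [div_neg, neg_neg]
      _ ≤ -(κ / (κ + V)) := neg_le_neg hk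
  have hle : -ϑ ≤ -(κ / (κ + V)) :=
    le_of_tendsto hslope (eventually_nhdsWithin_of_forall hall)
  have : κ / (κ + V) ≤ ϑ := by linarith
  rwa [add_comm V κ]
end

section
/- Let X be a compact convex subset of a Euclidean space E, f : E → ℝ convex and differentiable at a minimizer x* of f over X, with ∇f(x*)ᵀ(x − x*) ≥ 0 for all x ∈ X. Let g : X → ℝ be convex with a subgradient h_N at x*. Then for every x ∈ X, g(x) ≥ min_{X} f + (g(x*) − f(x*)) − 2R‖h_N − ∇f(x*)‖_*, where R is the radius of the smallest ‖·‖-ball containing X and ‖·‖_* is the dual norm. Consequently, min_{x∈X} g(x) ≥ min_{X} f + (g(x*) − f(x*)) − 2R‖h_N − ∇f(x*)‖_*. -/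
/-- Deterministic core of the SAA lower bound: if `x*` minimizes the convex function `f`
over the convex compact set `X ⊆ closedBall c R`, `f'` is the derivative of `f` at `x*`
with `f'(x − x*) ≥ 0` for `x ∈ X`, and `hN` is a subgradient at `x*` of the convex
function `g`, then for every `x ∈ X`,
`g(x) ≥ min_X f + (g(x*) − f(x*)) − 2R‖hN − f'‖`, and consequently
`min_X g ≥ min_X f + (g(x*) − f(x*)) − 2R‖hN − f'‖`. -/
theorem stmt_17 {E : Type*} [NormedAddCommGroup E] [NormedSpace ℝ E]
    (X : Set E) (hXconv : Convex ℝ X) (hXcomp : IsCompact X) (hXne : X.Nonempty)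
    (R : ℝ) (hR : ∃ c : E, X ⊆ Metric.closedBall c R)
    (f g : E → ℝ) (hf : ConvexOn ℝ X f) (hg : ConvexOn ℝ X g)
    (xstar : E) (hxstar : xstar ∈ X)
    (hmin : ∀ x ∈ X, f xstar ≤ f x)
    (f' : E →L[ℝ] ℝ) (hf' : HasFDerivAt f f' xstar)
    (hfoc : ∀ x ∈ X, 0 ≤ f' (x - xstar))
    (hN : E →L[ℝ] ℝ) (hsub : ∀ x ∈ X, g xstar + hN (x - xstar) ≤ g x) :
    (∀ x ∈ X, sInf (f '' X) + (g xstar - f xstar) - 2 * R * ‖hN - f'‖ ≤ g x) ∧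
      sInf (f '' X) + (g xstar - f xstar) - 2 * R * ‖hN - f'‖ ≤ sInf (g '' X) := by
  obtain ⟨c, hc⟩ := hR
  have hInf : sInf (f '' X) = f xstar := by
    apply le_antisymm
    · exact csInf_le ⟨f xstar, by rintro _ ⟨x, hx, rfl⟩; exact hmin x hx⟩
        ⟨xstar, hxstar, rfl⟩
    · exact le_csInf (hXne.image f) (by rintro _ ⟨x, hx, rfl⟩; exact hmin x hx)
  have key : ∀ x ∈ X, sInf (f '' X) + (g xstar - f xstar) - 2 * R * ‖hN - f'‖ ≤ g x := by
    intro x hx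
    have hdist : ‖x - xstar‖ ≤ 2 * R := by
      have h1 := Metric.mem_closedBall.mp (hc hx)
      have h2 := Metric.mem_closedBall.mp (hc hxstar)
      calc ‖x - xstar‖ ≤ ‖x - c‖ + ‖c - xstar‖ := norm_sub_le_norm_sub_add_norm_sub x c xstar
        _ ≤ R + R := by
            rw [← dist_eq_norm, ← dist_eq_norm]
            exact add_le_add h1 (by rwa [dist_comm])
        _ = 2 * R := by ring
    have hcs : -(2 * R * ‖hN - f'‖) ≤ (hN - f') (x - xstar) := by
      have h1 : |(hN - f') (x - xstar)| ≤ ‖hN - f'‖ * ‖x - xstar‖ := by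
        simpa [Real.norm_eq_abs] using (hN - f').le_opNorm (x - xstar)
      have h2 : ‖hN - f'‖ * ‖x - xstar‖ ≤ ‖hN - f'‖ * (2 * R) :=
        mul_le_mul_of_nonneg_left hdist (norm_nonneg _)
      nlinarith [abs_nonneg ((hN - f') (x - xstar)), neg_abs_le ((hN - f') (x - xstar))]
    have hsub' := hsub x hx
    have hfoc' := hfoc x hx
    have hexp : (hN - f') (x - xstar) = hN (x - xstar) - f' (x - xstar) := by simp
    rw [hInf]
    linarith [hexp ▸ hcs]
  refine ⟨key, le_csInf (hXne.image g) ?_⟩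
  rintro _ ⟨x, hx, rfl⟩
  exact key x hx
end

section
/- Let ‖·‖ be the ℓ₁ norm on ℝⁿ with n ≥ 3, and define ω(x) = (1/(pγ)) Σ_{i=1}^n |x_i|^p with p = 1 + 1/ln(n) and γ = 1/(e ln n). Then ω is strongly convex with modulus 1 with respect to ‖·‖₁ on the unit ℓ₁-ball, and Ω := max_{‖x‖₁ ≤ 1} √(2ω(x)) = √(2/(pγ)) = ln(n)·√(2e/(1 + ln n)). -/
open Real Set Filter

variable {p : ℝ}

lemma abs_rpow_tendsto_zero (hq : 0 < p) :
    Tendsto (fun v : ℝ => |v| ^ p) (nhds 0) (nhds 0) := by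
  have h1 : ContinuousAt (fun x : ℝ => x ^ p) |(0:ℝ)| := by
    rw [abs_zero]; exact Real.continuousAt_rpow_const _ _ (Or.inr hq.le)
  have h2 := (h1.comp continuous_abs.continuousAt).tendsto
  simpa [Real.zero_rpow hq.ne', Function.comp_def] using h2

lemma phi_deriv (hp1 : 1 < p) (u : ℝ) :
    HasDerivAt (fun v : ℝ => |v| ^ p) (p * u * |u| ^ (p - 2)) u := by
  rcases lt_trichotomy u 0 with hu | hu | hu
  · have hg : HasDerivAt (fun v : ℝ => (-v) ^ p) (p * (-u) ^ (p - 1) * (-1)) u := by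
      have h := Real.hasDerivAt_rpow_const (x := -u) (p := p) (Or.inl (by linarith))
      exact h.comp u ((hasDerivAt_id u).neg)
    have he : (fun v : ℝ => |v| ^ p) =ᶠ[nhds u] (fun v : ℝ => (-v) ^ p) := by
      filter_upwards [eventually_lt_nhds hu] with v hv
      rw [abs_of_neg hv]
    have hval : p * (-u) ^ (p - 1) * (-1) = p * u * |u| ^ (p - 2) := by
      rw [abs_of_neg hu, show p - 1 = (p-2) + 1 by ring,
        Real.rpow_add_one (by linarith : (-u : ℝ) ≠ 0)]
      ring
    exact hval ▸ (hg.congr_of_eventuallyEq he)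
  · subst hu
    have h0 : (p : ℝ) * 0 * |(0:ℝ)| ^ (p - 2) = 0 := by ring
    rw [h0, hasDerivAt_iff_tendsto_slope]
    apply squeeze_zero_norm' (a := fun v : ℝ => |v| ^ (p - 1))
    · filter_upwards [self_mem_nhdsWithin] with v hv
      have hv : v ≠ 0 := hv
      have key : |v| ^ p = |v| ^ (p - 1) * |v| := by
        rw [← Real.rpow_add_one (abs_ne_zero.2 hv)]; ring_nf
      rw [slope_def_field, abs_zero, Real.zero_rpow (by linarith : p ≠ 0), sub_zero, sub_zero,
        Real.norm_eq_abs, abs_div, abs_of_nonneg (Real.rpow_nonneg (abs_nonneg v) _), key,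
        mul_div_assoc, div_self (abs_ne_zero.2 hv), mul_one]
    · exact (abs_rpow_tendsto_zero (by linarith)).mono_left nhdsWithin_le_nhds
  · have h := Real.hasDerivAt_rpow_const (x := u) (p := p) (Or.inl hu.ne')
    have he : (fun v : ℝ => |v| ^ p) =ᶠ[nhds u] (fun v : ℝ => v ^ p) := by
      filter_upwards [eventually_gt_nhds hu] with v hv
      rw [abs_of_pos hv]
    have hval : p * u ^ (p-1) = p * u * |u| ^ (p - 2) := by
      rw [abs_of_pos hu, show p - 1 = (p-2) + 1 by ring, Real.rpow_add_one hu.ne']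
      ring
    exact hval ▸ (h.congr_of_eventuallyEq he)

lemma phi2_deriv (hp1 : 1 < p) {u : ℝ} (hu : u ≠ 0) :
    HasDerivAt (fun v : ℝ => p * v * |v| ^ (p - 2)) (p * (p - 1) * |u| ^ (p - 2)) u := by
  rcases hu.lt_or_gt with hu | hu
  · have h := Real.hasDerivAt_rpow_const (x := -u) (p := p - 2) (Or.inl (by linarith))
    have h2 : HasDerivAt (fun v : ℝ => (-v) ^ (p - 2))
        ((p - 2) * (-u) ^ (p - 2 - 1) * (-1)) u := h.comp u ((hasDerivAt_id u).neg)
    have h3 : HasDerivAt (fun v : ℝ => p * v * (-v) ^ (p - 2))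
        (p * u * ((p - 2) * (-u) ^ (p - 2 - 1) * (-1)) + p * 1 * (-u) ^ (p - 2)) u := by
      have := ((hasDerivAt_id u).const_mul p).mul h2
      simp only [id_eq, mul_one] at this
      exact this.congr_deriv (by ring)
    have he : (fun v : ℝ => p * v * |v| ^ (p - 2)) =ᶠ[nhds u]
        (fun v : ℝ => p * v * (-v) ^ (p - 2)) := by
      filter_upwards [eventually_lt_nhds hu] with v hv
      rw [abs_of_neg hv]
    have hval : p * u * ((p - 2) * (-u) ^ (p - 2 - 1) * (-1)) + p * 1 * (-u) ^ (p - 2)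
        = p * (p - 1) * |u| ^ (p - 2) := by
      rw [abs_of_neg hu, show p - 2 = (p - 2 - 1) + 1 by ring,
        Real.rpow_add_one (by linarith : (-u : ℝ) ≠ 0)]
      ring
    exact hval ▸ (h3.congr_of_eventuallyEq he)
  · have h2 := Real.hasDerivAt_rpow_const (x := u) (p := p - 2) (Or.inl hu.ne')
    have h3 : HasDerivAt (fun v : ℝ => p * v * v ^ (p - 2))
        (p * u * ((p - 2) * u ^ (p - 2 - 1)) + p * 1 * u ^ (p - 2)) u := by
      have := ((hasDerivAt_id u).const_mul p).mul h2
      simp only [id_eq, mul_one] at this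
      exact this.congr_deriv (by ring)
    have he : (fun v : ℝ => p * v * |v| ^ (p - 2)) =ᶠ[nhds u]
        (fun v : ℝ => p * v * v ^ (p - 2)) := by
      filter_upwards [eventually_gt_nhds hu] with v hv
      rw [abs_of_pos hv]
    have hval : p * u * ((p - 2) * u ^ (p - 2 - 1)) + p * 1 * u ^ (p - 2)
        = p * (p - 1) * |u| ^ (p - 2) := by
      rw [abs_of_pos hu, show p - 2 = (p - 2 - 1) + 1 by ring,
        Real.rpow_add_one hu.ne']
      ring
    exact hval ▸ (h3.congr_of_eventuallyEq he)

lemma phi'_cont (hp1 : 1 < p) : Continuous (fun v : ℝ => p * v * |v| ^ (p - 2)) := by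
  rw [continuous_iff_continuousAt]
  intro u
  rcases eq_or_ne u 0 with rfl | hu
  · have key : ∀ v : ℝ, |p * v * |v| ^ (p - 2)| ≤ |p| * |v| ^ (p - 1) := by
      intro v
      rcases eq_or_ne v 0 with rfl | hv
      · simp [Real.zero_rpow (by linarith : p - 1 ≠ 0)]
      · rw [abs_mul, abs_mul, abs_of_nonneg (Real.rpow_nonneg (abs_nonneg v) _),
          show p - 1 = (p - 2) + 1 by ring, Real.rpow_add_one (abs_ne_zero.2 hv)]
        apply le_of_eq
        ring
    have : Tendsto (fun v : ℝ => p * v * |v| ^ (p - 2)) (nhds 0) (nhds 0) := by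
      apply squeeze_zero_norm (a := fun v : ℝ => |p| * |v| ^ (p - 1)) key
      have := (abs_rpow_tendsto_zero (p := p - 1) (by linarith)).const_mul |p|
      simpa using this
    simpa [ContinuousAt] using this
  · have h1 : ContinuousAt (fun x : ℝ => x ^ (p - 2)) |u| :=
      Real.continuousAt_rpow_const _ _ (Or.inl (abs_ne_zero.2 hu))
    exact (continuousAt_const.mul continuousAt_id).mul (h1.comp continuous_abs.continuousAt)

lemma sum_rpow_le (n : ℕ) (hn : 0 < n) {q : ℝ} (hq0 : 0 < q) (hq1 : q ≤ 1)
    (u : Fin n → ℝ) (hu : ∀ i, 0 ≤ u i) :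
    ∑ i, u i ^ q ≤ (n : ℝ) ^ (1 - q) * (∑ i, u i) ^ q := by
  have hn' : (0:ℝ) < n := Nat.cast_pos.2 hn
  have h := Real.arith_mean_le_rpow_mean Finset.univ (fun _ => (n : ℝ)⁻¹)
    (fun i => u i ^ q) (fun i _ => by positivity) (by
      simp [Finset.sum_const, Finset.card_univ]
      field_simp) (fun i _ => Real.rpow_nonneg (hu i) q) (p := 1/q)
    (by rw [le_div_iff₀ hq0]; linarith)
  have hsimp : ∀ i : Fin n, (u i ^ q) ^ ((1:ℝ)/q) = u i := by
    intro i
    rw [← Real.rpow_mul (hu i), mul_one_div, div_self hq0.ne', Real.rpow_one]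
  simp only [hsimp, one_div_one_div] at h
  rw [← Finset.mul_sum, ← Finset.mul_sum] at h
  have hS : 0 ≤ ∑ i, u i := Finset.sum_nonneg fun i _ => hu i
  have h2 : ((n:ℝ)⁻¹ * ∑ i, u i) ^ q = ((n:ℝ)⁻¹) ^ q * (∑ i, u i) ^ q :=
    Real.mul_rpow (by positivity) hS
  rw [h2] at h
  have h3 : (n:ℝ) ^ (1 - q) = (n:ℝ) * ((n:ℝ)⁻¹) ^ q := by
    rw [Real.rpow_sub hn', Real.rpow_one, Real.inv_rpow hn'.le, div_eq_mul_inv]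
  rw [h3]
  calc ∑ i, u i ^ q = (n:ℝ) * ((n:ℝ)⁻¹ * ∑ i, u i ^ q) := by
        field_simp
    _ ≤ (n:ℝ) * (((n:ℝ)⁻¹) ^ q * (∑ i, u i) ^ q) := by
        apply mul_le_mul_of_nonneg_left h hn'.le
    _ = (n:ℝ) * ((n:ℝ)⁻¹) ^ q * (∑ i, u i) ^ q := by ring

lemma seg_convexOn {n : ℕ} (hn : 0 < n) (p γ : ℝ) (hp1 : 1 < p) (hp2 : p < 2) (hγ : 0 < γ)
    (E : ℝ) (hE : ∀ u : Fin n → ℝ, (∑ i, |u i|) ≤ 1 → ∑ i, |u i| ^ (2 - p) ≤ E)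
    (hE2 : E ≤ 1 / (p * γ) * (p * (p - 1)))
    (c d : Fin n → ℝ)
    (hball : ∀ t ∈ Set.Icc (0:ℝ) 1, (∑ i, |c i + t * d i|) ≤ 1) :
    ConvexOn ℝ (Set.Icc (0:ℝ) 1)
      (fun t => 1 / (p * γ) * ∑ i, |c i + t * d i| ^ p
        - t ^ 2 * ((∑ i, |d i|) ^ 2 / 2)) := by
  set K := 1 / (p * γ) with hK
  set L := ∑ i, |d i| with hL
  set g : ℝ → ℝ := fun t => K * ∑ i, |c i + t * d i| ^ p - t ^ 2 * (L ^ 2 / 2) with hg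
  set G : ℝ → ℝ := fun t =>
    K * ∑ i, p * (c i + t * d i) * |c i + t * d i| ^ (p - 2) * d i - t * L ^ 2 with hGdef
  have haff : ∀ (i : Fin n) (t : ℝ), HasDerivAt (fun s : ℝ => c i + s * d i) (d i) t := by
    intro i t
    simpa using ((hasDerivAt_id t).mul_const (d i)).const_add (c i)
  -- g has derivative G everywhere
  have hgG : ∀ t, HasDerivAt g (G t) t := by
    intro t
    have h1 : ∀ i : Fin n, HasDerivAt (fun s : ℝ => |c i + s * d i| ^ p)
        (p * (c i + t * d i) * |c i + t * d i| ^ (p - 2) * d i) t := fun i =>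
      (phi_deriv hp1 (c i + t * d i)).comp (h₂ := fun v : ℝ => |v| ^ p) t (haff i t)
    have h2 : HasDerivAt (fun s : ℝ => ∑ i, |c i + s * d i| ^ p)
        (∑ i, p * (c i + t * d i) * |c i + t * d i| ^ (p - 2) * d i) t :=
      HasDerivAt.fun_sum fun i _ => h1 i
    have h2' := h2.const_mul K
    have h3 : HasDerivAt (fun s : ℝ => s ^ 2 * (L ^ 2 / 2)) (t * L ^ 2) t := by
      have := (hasDerivAt_pow 2 t).mul_const (L ^ 2 / 2)
      exact this.congr_deriv (by ring)
    exact h2'.sub h3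
  -- continuity of G
  have hGcont : Continuous G := by
    have h1 : ∀ i : Fin n, Continuous
        (fun t : ℝ => p * (c i + t * d i) * |c i + t * d i| ^ (p - 2) * d i) := by
      intro i
      have := (phi'_cont hp1).comp (by continuity : Continuous (fun t : ℝ => c i + t * d i))
      exact this.mul continuous_const
    have h2 : Continuous (fun t : ℝ =>
        ∑ i, p * (c i + t * d i) * |c i + t * d i| ^ (p - 2) * d i) :=
      continuous_finset_sum _ fun i _ => h1 i
    exact (continuous_const.mul h2).sub (continuous_id.mul continuous_const)
  -- bad set
  classical
  set B : Finset ℝ := (Finset.univ.filter fun i : Fin n => d i ≠ 0).image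
      (fun i => -(c i) / d i) with hB
  have hgood : ∀ t : ℝ, t ∉ B → ∀ i : Fin n, d i ≠ 0 → c i + t * d i ≠ 0 := by
    intro t ht i hdi hzero
    apply ht
    rw [hB, Finset.mem_image]
    exact ⟨i, Finset.mem_filter.2 ⟨Finset.mem_univ i, hdi⟩, by field_simp; linarith [hzero]⟩
  -- derivative of G off B
  have hGG' : ∀ t ∉ B, HasDerivAt G
      (K * ∑ i, p * (p - 1) * |c i + t * d i| ^ (p - 2) * d i ^ 2 - L ^ 2) t := by
    intro t ht
    have h1 : ∀ i : Fin n, HasDerivAt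
        (fun s : ℝ => p * (c i + s * d i) * |c i + s * d i| ^ (p - 2) * d i)
        (p * (p - 1) * |c i + t * d i| ^ (p - 2) * d i ^ 2) t := by
      intro i
      by_cases hdi : d i = 0
      · rw [hdi]
        simpa using hasDerivAt_const t (0:ℝ)
      · have hu : c i + t * d i ≠ 0 := hgood t ht i hdi
        have := ((phi2_deriv hp1 hu).comp t (haff i t)).mul_const (d i)
        exact this.congr_deriv (by ring)
    have h2 : HasDerivAt (fun s : ℝ =>
        ∑ i, p * (c i + s * d i) * |c i + s * d i| ^ (p - 2) * d i)
        (∑ i, p * (p - 1) * |c i + t * d i| ^ (p - 2) * d i ^ 2) t :=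
      HasDerivAt.fun_sum fun i _ => h1 i
    have h2' := h2.const_mul K
    have h3 : HasDerivAt (fun s : ℝ => s * L ^ 2) (L ^ 2) t := by
      simpa using (hasDerivAt_id t).mul_const (L ^ 2)
    exact h2'.sub h3
  -- second derivative nonneg on the ball
  have hnonneg : ∀ t ∈ Set.Icc (0:ℝ) 1, t ∉ B →
      0 ≤ K * ∑ i, p * (p - 1) * |c i + t * d i| ^ (p - 2) * d i ^ 2 - L ^ 2 := by
    intro t htI htB
    set u : Fin n → ℝ := fun i => c i + t * d i with hu
    set S1 := ∑ i, |u i| ^ (p - 2) * d i ^ 2 with hS1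
    set S2 := ∑ i, |u i| ^ (2 - p) with hS2
    have hS1nn : 0 ≤ S1 := Finset.sum_nonneg fun i _ => by positivity
    have hCS : L ^ 2 ≤ S1 * S2 := by
      have := Finset.sum_mul_sq_le_sq_mul_sq Finset.univ
        (fun i => |u i| ^ ((p - 2) / 2) * |d i|) (fun i => |u i| ^ ((2 - p) / 2))
      have hfg : ∀ i : Fin n, |u i| ^ ((p - 2) / 2) * |d i| * |u i| ^ ((2 - p) / 2) = |d i| := by
        intro i
        by_cases hui : u i = 0
        · have hdi : d i = 0 := by
            by_contra hdi
            exact hgood t htB i hdi hui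
          simp [hui, hdi]
        · have h0 : (0:ℝ) < |u i| := abs_pos.2 hui
          rw [mul_comm (|u i| ^ ((p - 2) / 2)) (|d i|), mul_assoc,
            ← Real.rpow_add h0, show (p - 2) / 2 + (2 - p) / 2 = 0 by ring, Real.rpow_zero,
            mul_one]
      have hf2 : ∀ i : Fin n, (|u i| ^ ((p - 2) / 2) * |d i|) ^ 2 = |u i| ^ (p - 2) * d i ^ 2 := by
        intro i
        rw [mul_pow, ← Real.rpow_natCast (|u i| ^ ((p - 2) / 2)) 2,
          ← Real.rpow_mul (abs_nonneg _), sq_abs]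
        norm_num
      have hg2 : ∀ i : Fin n, (|u i| ^ ((2 - p) / 2)) ^ 2 = |u i| ^ (2 - p) := by
        intro i
        rw [← Real.rpow_natCast (|u i| ^ ((2 - p) / 2)) 2, ← Real.rpow_mul (abs_nonneg _)]
        norm_num
      calc L ^ 2 = (∑ i, |u i| ^ ((p - 2) / 2) * |d i| * |u i| ^ ((2 - p) / 2)) ^ 2 := by
            rw [hL]; congr 1; exact (Finset.sum_congr rfl fun i _ => hfg i).symm
        _ ≤ (∑ i, (|u i| ^ ((p - 2) / 2) * |d i|) ^ 2) * ∑ i, (|u i| ^ ((2 - p) / 2)) ^ 2 :=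
            this
        _ = S1 * S2 := by
            rw [hS1, hS2]
            congr 1
            · exact Finset.sum_congr rfl fun i _ => hf2 i
            · exact Finset.sum_congr rfl fun i _ => hg2 i
    have hS2E : S2 ≤ E := hE u (hball t htI)
    have hLE : L ^ 2 ≤ S1 * E := hCS.trans (mul_le_mul_of_nonneg_left hS2E hS1nn)
    have hsum : ∑ i, p * (p - 1) * |u i| ^ (p - 2) * d i ^ 2 = p * (p - 1) * S1 := by
      rw [hS1, Finset.mul_sum]
      exact Finset.sum_congr rfl fun i _ => by ring
    have hKpos : 0 < K := by
      rw [hK]; positivity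
    calc (0:ℝ) ≤ E * S1 - L ^ 2 := by nlinarith
      _ ≤ K * (p * (p - 1)) * S1 - L ^ 2 := by nlinarith
      _ = K * ∑ i, p * (p - 1) * |u i| ^ (p - 2) * d i ^ 2 - L ^ 2 := by rw [hsum]; ring
  -- base monotonicity on intervals avoiding B
  have hbase : ∀ s t : ℝ, s ∈ Set.Icc (0:ℝ) 1 → t ∈ Set.Icc (0:ℝ) 1 → s ≤ t →
      (∀ x ∈ Set.Ioo s t, x ∉ B) → G s ≤ G t := by
    intro s t hs ht hst hav
    have hmono : MonotoneOn G (Set.Icc s t) := by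
      apply monotoneOn_of_deriv_nonneg (convex_Icc s t) hGcont.continuousOn
      · intro x hx
        rw [interior_Icc] at hx
        exact ((hGG' x (hav x hx)).differentiableAt).differentiableWithinAt
      · intro x hx
        rw [interior_Icc] at hx
        have hxB := hav x hx
        have hxI : x ∈ Set.Icc (0:ℝ) 1 :=
          ⟨le_trans hs.1 hx.1.le, le_trans hx.2.le ht.2⟩
        rw [(hGG' x hxB).deriv]
        exact hnonneg x hxI hxB
    exact hmono ⟨le_refl s, hst⟩ ⟨hst, le_refl t⟩ hst
  -- full monotonicity by induction on the number of bad points inside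
  have hclaim : ∀ k : ℕ, ∀ s t : ℝ, s ∈ Set.Icc (0:ℝ) 1 → t ∈ Set.Icc (0:ℝ) 1 → s ≤ t →
      (B.filter (fun x => x ∈ Set.Ioo s t)).card ≤ k → G s ≤ G t := by
    intro k
    induction k with
    | zero =>
      intro s t hs ht hst hcard
      apply hbase s t hs ht hst
      intro x hx hxB
      have : x ∈ B.filter (fun x => x ∈ Set.Ioo s t) := Finset.mem_filter.2 ⟨hxB, hx⟩
      simp only [Nat.le_zero, Finset.card_eq_zero] at hcard
      rw [hcard] at this
      exact absurd this (Finset.notMem_empty x)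
    | succ k ih =>
      intro s t hs ht hst hcard
      by_cases hemp : (B.filter (fun x => x ∈ Set.Ioo s t)) = ∅
      · apply hbase s t hs ht hst
        intro x hx hxB
        have : x ∈ B.filter (fun x => x ∈ Set.Ioo s t) := Finset.mem_filter.2 ⟨hxB, hx⟩
        rw [hemp] at this
        exact absurd this (Finset.notMem_empty x)
      · obtain ⟨b, hb⟩ := Finset.nonempty_iff_ne_empty.2 hemp
        obtain ⟨hbB, hbI⟩ := Finset.mem_filter.1 hb
        have hbI' : b ∈ Set.Icc (0:ℝ) 1 :=
          ⟨le_trans hs.1 hbI.1.le, le_trans hbI.2.le ht.2⟩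
        have hsub1 : B.filter (fun x => x ∈ Set.Ioo s b) ⊆
            (B.filter (fun x => x ∈ Set.Ioo s t)).erase b := by
          intro x hx
          obtain ⟨hxB, hxI⟩ := Finset.mem_filter.1 hx
          refine Finset.mem_erase.2 ⟨ne_of_lt hxI.2, Finset.mem_filter.2 ⟨hxB,
            ⟨hxI.1, lt_trans hxI.2 hbI.2⟩⟩⟩
        have hsub2 : B.filter (fun x => x ∈ Set.Ioo b t) ⊆
            (B.filter (fun x => x ∈ Set.Ioo s t)).erase b := by
          intro x hx
          obtain ⟨hxB, hxI⟩ := Finset.mem_filter.1 hx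
          refine Finset.mem_erase.2 ⟨(ne_of_lt hxI.1).symm, Finset.mem_filter.2 ⟨hxB,
            ⟨lt_trans hbI.1 hxI.1, hxI.2⟩⟩⟩
        have hcard' : ((B.filter (fun x => x ∈ Set.Ioo s t)).erase b).card ≤ k := by
          have := Finset.card_erase_of_mem hb
          omega
        have h1 := ih s b hs hbI' hbI.1.le
          (le_trans (Finset.card_le_card hsub1) hcard')
        have h2 := ih b t hbI' ht hbI.2.le
          (le_trans (Finset.card_le_card hsub2) hcard')
        linarith
  have hmonoG : MonotoneOn G (Set.Icc (0:ℝ) 1) := by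
    intro s hs t ht hst
    exact hclaim B.card s t hs ht hst (Finset.card_le_card (Finset.filter_subset _ _))
  -- conclude convexity
  have hderiv_g : deriv g = G := funext fun t => (hgG t).deriv
  apply MonotoneOn.convexOn_of_deriv (convex_Icc 0 1)
  · exact (Differentiable.continuous fun t => (hgG t).differentiableAt).continuousOn
  · intro x hx
    exact ((hgG x).differentiableAt).differentiableWithinAt
  · rw [hderiv_g, interior_Icc]
    exact hmonoG.mono Set.Ioo_subset_Icc_self
/-- For `n ≥ 3`, `p = 1 + 1/ln n`, `γ = 1/(e ln n)`, the function
`ω(x) = (1/(pγ)) Σᵢ |xᵢ|^p` is strongly convex with modulus `1` with respect to the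
`ℓ₁`-norm on the unit `ℓ₁`-ball, and
`Ω = max_{‖x‖₁≤1} √(2ω(x)) = √(2/(pγ)) = ln n · √(2e/(1 + ln n))`. -/
theorem stmt_18 (n : ℕ) (hn : 3 ≤ n) (p γ : ℝ)
    (hp : p = 1 + 1 / Real.log n) (hγ : γ = 1 / (Real.exp 1 * Real.log n))
    (w : (Fin n → ℝ) → ℝ)
    (hw : w = fun x => (1 / (p * γ)) * ∑ i, |x i| ^ p) :
    (∀ x y : Fin n → ℝ, (∑ i, |x i|) ≤ 1 → (∑ i, |y i|) ≤ 1 →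
      ∀ a b : ℝ, 0 ≤ a → 0 ≤ b → a + b = 1 →
        w (a • x + b • y) ≤
          a * w x + b * w y - a * b * (1 / 2) * (∑ i, |x i - y i|) ^ 2) ∧
    IsGreatest ((fun x : Fin n → ℝ => Real.sqrt (2 * w x)) ''
        {x | (∑ i, |x i|) ≤ 1}) (Real.sqrt (2 / (p * γ))) ∧
    Real.sqrt (2 / (p * γ)) =
      Real.log n * Real.sqrt (2 * Real.exp 1 / (1 + Real.log n)) := by
  subst hw
  have hn0 : 0 < n := by omega
  have hn3 : (3:ℝ) ≤ n := by exact_mod_cast hn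
  have hLgt : 1 < Real.log n := by
    rw [show (1:ℝ) = Real.log (Real.exp 1) by rw [Real.log_exp]]
    apply Real.log_lt_log (Real.exp_pos 1)
    calc Real.exp 1 < 2.7182818286 := Real.exp_one_lt_d9
      _ < 3 := by norm_num
      _ ≤ n := hn3
  have hL0 : 0 < Real.log n := lt_trans one_pos hLgt
  have hp1 : 1 < p := by
    rw [hp]; have := one_div_pos.2 hL0; linarith
  have hp2 : p < 2 := by
    rw [hp]; have := (div_lt_one hL0).2 hLgt; linarith
  have hγpos : 0 < γ := by rw [hγ]; positivity
  have hppos : 0 < p := by linarith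
  have hpγ : 0 < p * γ := by positivity
  have hnp : (n : ℝ) ^ (p - 1) = Real.exp 1 := by
    rw [Real.rpow_def_of_pos (by positivity), hp,
      show (1:ℝ) + 1 / Real.log n - 1 = 1 / Real.log n by ring, mul_one_div,
      div_self hL0.ne']
  have hE : ∀ u : Fin n → ℝ, (∑ i, |u i|) ≤ 1 → ∑ i, |u i| ^ (2 - p) ≤ Real.exp 1 := by
    intro u hu
    have h1 := sum_rpow_le n hn0 (q := 2 - p) (by linarith) (by linarith)
      (fun i => |u i|) (fun i => abs_nonneg _)
    have h2 : (∑ i, |u i|) ^ (2 - p) ≤ 1 :=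
      Real.rpow_le_one (Finset.sum_nonneg fun i _ => abs_nonneg _) hu (by linarith)
    calc ∑ i, |u i| ^ (2 - p) ≤ (n : ℝ) ^ (1 - (2 - p)) * (∑ i, |u i|) ^ (2 - p) := h1
      _ ≤ (n : ℝ) ^ (1 - (2 - p)) * 1 :=
          mul_le_mul_of_nonneg_left h2 (Real.rpow_nonneg (by positivity) _)
      _ = Real.exp 1 := by rw [mul_one, show (1:ℝ) - (2 - p) = p - 1 by ring, hnp]
  have hE2 : Real.exp 1 ≤ 1 / (p * γ) * (p * (p - 1)) := by
    apply le_of_eq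
    have h1 : p - 1 = 1 / Real.log n := by rw [hp]; ring
    rw [h1, hγ]
    field_simp
  refine ⟨?_, ?_, ?_⟩
  · -- strong convexity
    intro x y hx hy a b ha hb hab
    have hb' : b = 1 - a := by linarith
    have hball : ∀ t ∈ Set.Icc (0:ℝ) 1, (∑ i, |y i + t * (x i - y i)|) ≤ 1 := by
      intro t ht
      calc ∑ i, |y i + t * (x i - y i)| ≤ ∑ i, ((1 - t) * |y i| + t * |x i|) := by
            apply Finset.sum_le_sum
            intro i _
            rw [show y i + t * (x i - y i) = (1 - t) * y i + t * x i by ring]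
            refine (abs_add_le _ _).trans ?_
            rw [abs_mul, abs_mul, abs_of_nonneg ht.1, abs_of_nonneg (by linarith [ht.2])]
        _ = (1 - t) * ∑ i, |y i| + t * ∑ i, |x i| := by
            rw [Finset.sum_add_distrib, ← Finset.mul_sum, ← Finset.mul_sum]
        _ ≤ (1 - t) * 1 + t * 1 := add_le_add
            (mul_le_mul_of_nonneg_left hy (by linarith [ht.2]))
            (mul_le_mul_of_nonneg_left hx ht.1)
        _ = 1 := by ring
    have hcx := seg_convexOn hn0 p γ hp1 hp2 hγpos (Real.exp 1) hE hE2
      y (fun i => x i - y i) hball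
    have h1m : (1:ℝ) ∈ Set.Icc (0:ℝ) 1 := ⟨zero_le_one, le_refl 1⟩
    have h0m : (0:ℝ) ∈ Set.Icc (0:ℝ) 1 := ⟨le_refl 0, zero_le_one⟩
    have key := hcx.2 h1m h0m ha hb hab
    simp only [smul_eq_mul, mul_one, mul_zero, add_zero, one_mul, zero_mul, one_pow] at key
    have harg1 : (fun i => |y i + a * (x i - y i)| ^ p)
        = fun i => |(a • x + b • y) i| ^ p := by
      funext i
      congr 1
      rw [Pi.add_apply, Pi.smul_apply, Pi.smul_apply, smul_eq_mul, smul_eq_mul, hb']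
      ring_nf
    have harg2 : (fun i => |y i + (x i - y i)| ^ p) = fun i => |x i| ^ p := by
      funext i; congr 2; ring
    rw [harg1, harg2] at key
    simp only []
    subst hb'
    ring_nf at key ⊢
    linarith [key]
  · -- IsGreatest
    constructor
    · refine ⟨fun i => if i = ⟨0, hn0⟩ then 1 else 0, ?_, ?_⟩
      · simp only [Set.mem_setOf_eq]
        have habs : ∀ i : Fin n, |if i = ⟨0, hn0⟩ then (1:ℝ) else 0|
            = if i = ⟨0, hn0⟩ then (1:ℝ) else 0 := by
          intro i; by_cases h : i = ⟨0, hn0⟩ <;> simp [h]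
        rw [Finset.sum_congr rfl fun i _ => habs i,
          Finset.sum_ite_eq' Finset.univ (⟨0, hn0⟩ : Fin n) (fun _ => (1:ℝ))]
        simp
      · simp only []
        have hval : (∑ i : Fin n, |if i = ⟨0, hn0⟩ then (1:ℝ) else 0| ^ p) = 1 := by
          have : (∑ i : Fin n, |if i = ⟨0, hn0⟩ then (1:ℝ) else 0| ^ p)
              = ∑ i : Fin n, if i = ⟨0, hn0⟩ then (1:ℝ) else 0 := by
            apply Finset.sum_congr rfl
            intro i _
            by_cases h : i = ⟨0, hn0⟩ <;>
              simp [h, Real.one_rpow, Real.zero_rpow (by linarith : p ≠ 0)]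
          rw [this, Finset.sum_ite_eq' Finset.univ (⟨0, hn0⟩ : Fin n) (fun _ => (1:ℝ))]
          simp
        rw [hval]
        congr 1
        ring
    · rintro v ⟨x, hx, rfl⟩
      simp only [Set.mem_setOf_eq] at hx
      apply Real.sqrt_le_sqrt
      have hsum : (∑ i, |x i| ^ p) ≤ 1 := by
        refine le_trans (Finset.sum_le_sum fun i _ => ?_) hx
        have hle : |x i| ≤ 1 := by
          refine le_trans ?_ hx
          exact Finset.single_le_sum (fun j _ => abs_nonneg (x j)) (Finset.mem_univ i)
        rcases eq_or_ne (x i) 0 with h | h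
        · rw [h, abs_zero, Real.zero_rpow (by linarith : p ≠ 0)]
        · calc |x i| ^ p ≤ |x i| ^ (1:ℝ) :=
              Real.rpow_le_rpow_of_exponent_ge (abs_pos.2 h) hle (by linarith)
            _ = |x i| := Real.rpow_one _
      calc 2 * (1 / (p * γ) * ∑ i, |x i| ^ p) ≤ 2 * (1 / (p * γ) * 1) := by
            apply mul_le_mul_of_nonneg_left _ (by norm_num)
            exact mul_le_mul_of_nonneg_left hsum (by positivity)
        _ = 2 / (p * γ) := by field_simp
  · -- numeric identity
    have h23 : 2 / (p * γ) = (Real.log n) ^ 2 * (2 * Real.exp 1 / (1 + Real.log n)) := by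
      rw [hp, hγ]
      have h1 : (1:ℝ) + Real.log n ≠ 0 := by positivity
      field_simp
      ring
    rw [h23, Real.sqrt_mul (sq_nonneg _), Real.sqrt_sq hL0.le]
end
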